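/- If S is a semiring in which every subtractive left ideal is a direct summand of S as a left S-semimodule, then S is left k-Artinian and left k-Noetherian, i.e., S satisfies both the DCC and the ACC on subtractive left ideals. -/

import Mathlib

/-- A left ideal `I ≤ S` (a submodule of `S` as a left `S`-semimodule) is subtractive. -/
def Subtractive {S : Type*} [Semiring S] (I : Submodule S S) : Prop :=
  ∀ s : S, ∀ x ∈ I, ∀ y ∈ I, s + x = y → s ∈ I

/-- A left ideal `I` is a direct summand of `S`: `S = I ⊕ J` for some left ideal `J`. -/
def IsDirectSummand {S : Type*} [Semiring S] (I : Submodule S S) : Prop :=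
  ∃ J : Submodule S S, ∀ s : S, ∃! p : I × J, s = (p.1 : S) + (p.2 : S)

/-- `J` is a complement of `I`. -/
def SCompl {S : Type*} [Semiring S] (I J : Submodule S S) : Prop :=
  ∀ s : S, ∃! p : I × J, s = (p.1 : S) + (p.2 : S)

lemma decomp_unique {S : Type*} [Semiring S] {I J : Submodule S S} (hJ : SCompl I J)
    {a b a' b' : S} (ha : a ∈ I) (hb : b ∈ J) (ha' : a' ∈ I) (hb' : b' ∈ J)
    (hab : a + b = a' + b') : a = a' ∧ b = b' := by
  obtain ⟨p, _, hu⟩ := hJ (a + b)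
  have h1 : (⟨⟨a, ha⟩, ⟨b, hb⟩⟩ : I × J) = p := hu _ rfl
  have h2 : (⟨⟨a', ha'⟩, ⟨b', hb'⟩⟩ : I × J) = p := hu _ hab
  have h3 := h1.trans h2.symm
  exact ⟨congrArg (fun q => (q.1 : S)) h3, congrArg (fun q => (q.2 : S)) h3⟩

lemma compl_subtractive {S : Type*} [Semiring S] {I J : Submodule S S} (hJ : SCompl I J) :
    Subtractive J := by
  intro s x hx y hy hsx
  obtain ⟨⟨a, b⟩, hp, _⟩ := hJ s
  have hab : (a : S) + ((b : S) + x) = 0 + y := by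
    rw [← add_assoc, ← hp, hsx, zero_add]
  have := decomp_unique hJ a.2 (J.add_mem b.2 hx) I.zero_mem hy hab
  have hs : s = (b : S) := by rw [hp, this.1, zero_add]
  rw [hs]; exact b.2

lemma acc_aux {S : Type*} [Semiring S]
    (h : ∀ I : Submodule S S, Subtractive I → IsDirectSummand I)
    (f : ℕ → Submodule S S) (hsub : ∀ n, Subtractive (f n)) (hf : Monotone f) :
    ∃ n, ∀ m, n ≤ m → f m = f n := by
  set I := ⨆ n, f n with hI
  have hmem : ∀ x : S, x ∈ I ↔ ∃ n, x ∈ f n := fun x =>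
    Submodule.mem_iSup_of_directed f hf.directed_le
  have hIsub : Subtractive I := by
    intro s x hx y hy hxy
    obtain ⟨n, hn⟩ := (hmem x).1 hx
    obtain ⟨m, hm⟩ := (hmem y).1 hy
    have hk := hsub (max n m) s x (hf (le_max_left n m) hn) y (hf (le_max_right n m) hm) hxy
    exact (hmem s).2 ⟨max n m, hk⟩
  obtain ⟨J, hJ⟩ := h I hIsub
  obtain ⟨⟨e, u⟩, h1, _⟩ := hJ 1
  obtain ⟨n, hen⟩ := (hmem (e : S)).1 e.2
  refine ⟨n, fun m hm => le_antisymm ?_ (hf hm)⟩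
  intro x hx
  have hxI : x ∈ I := (hmem x).2 ⟨m, hx⟩
  have hsplit : x + 0 = x * (e : S) + x * (u : S) := by
    rw [add_zero, ← mul_add, ← h1, mul_one]
  have heI : x * (e : S) ∈ I := by simpa [smul_eq_mul] using I.smul_mem x e.2
  have huJ : x * (u : S) ∈ J := by simpa [smul_eq_mul] using J.smul_mem x u.2
  have hq := decomp_unique hJ hxI J.zero_mem heI huJ hsplit
  have : x = x * (e : S) := hq.1
  rw [this]
  simpa [smul_eq_mul] using (f n).smul_mem x hen

lemma dcc_aux {S : Type*} [Semiring S]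
    (h : ∀ I : Submodule S S, Subtractive I → IsDirectSummand I)
    (f : ℕ → Submodule S S) (hsub : ∀ n, Subtractive (f n)) (hf : Antitone f) :
    ∃ n, ∀ m, n ≤ m → f m = f n := by
  have hC : ∀ n, ∃ J, SCompl (f n) J := fun n => h (f n) (hsub n)
  choose C hCspec using hC
  set D : ℕ → Submodule S S := fun n => C (n + 1) ⊓ f n with hD
  set T : ℕ → Submodule S S := fun n => Nat.rec (C 0) (fun n Tn => D n ⊔ Tn) n with hTdef
  have hTsucc : ∀ n, T (n + 1) = D n ⊔ T n := fun n => rfl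
  -- relative decomposition inside f n
  have hrel : ∀ n, ∀ x ∈ f n, ∃ a ∈ f (n + 1), ∃ d ∈ D n, x = a + d := by
    intro n x hx
    obtain ⟨⟨a, d⟩, hp, _⟩ := hCspec (n + 1) x
    have hdn : (d : S) ∈ f n := by
      refine hsub n (d : S) (a : S) (hf n.le_succ a.2) x hx ?_
      rw [add_comm]; exact hp.symm
    exact ⟨a, a.2, d, Submodule.mem_inf.2 ⟨d.2, hdn⟩, hp⟩
  have hT : ∀ n, SCompl (f n) (T n) := by
    intro n
    induction n with
    | zero => exact hCspec 0
    | succ n ih =>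
      intro s
      obtain ⟨⟨x, t⟩, hp, _⟩ := ih s
      obtain ⟨a, ha, d, hd, hxad⟩ := hrel n (x : S) x.2
      have hdD : d ∈ D n := hd
      have hdT : d ∈ T (n + 1) := by rw [hTsucc]; exact Submodule.mem_sup_left hdD
      have htT : (t : S) ∈ T (n + 1) := by rw [hTsucc]; exact Submodule.mem_sup_right t.2
      refine ⟨⟨⟨a, ha⟩, ⟨d + (t : S), (T (n + 1)).add_mem hdT htT⟩⟩, ?_, ?_⟩
      · show s = a + (d + (t : S))
        rw [hp, hxad, add_assoc]
      · rintro ⟨⟨a', ha'⟩, ⟨w', hw'⟩⟩ hq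
        have hw'' : w' ∈ D n ⊔ T n := by rw [← hTsucc]; exact hw'
        obtain ⟨d', hd', t', ht', hw⟩ := Submodule.mem_sup.1 hw''
        have hq' : s = a' + w' := hq
        have heq : (a + d) + (t : S) = (a' + d') + t' := by
          rw [← hxad, ← hp, hq', ← hw, add_assoc]
        have hadn : a + d ∈ f n := (f n).add_mem (hf n.le_succ ha) (Submodule.mem_inf.1 hd).2
        have hadn' : a' + d' ∈ f n := (f n).add_mem (hf n.le_succ ha') (Submodule.mem_inf.1 hd').2
        have h1 := decomp_unique ih hadn t.2 hadn' ht' heq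
        have h2 := decomp_unique (hCspec (n + 1)) ha (Submodule.mem_inf.1 hd).1 ha'
          (Submodule.mem_inf.1 hd').1 h1.1
        have hw'eq : w' = d + (t : S) := by rw [← hw, h2.2, h1.2]
        ext
        · exact h2.1.symm
        · exact hw'eq
  have hTsub : ∀ n, Subtractive (T n) := fun n => compl_subtractive (hT n)
  have hTmono : Monotone T := monotone_nat_of_le_succ (fun n => by
    rw [hTsucc]; exact le_sup_right)
  obtain ⟨n, hn⟩ := acc_aux h T hTsub hTmono
  have hstep : ∀ m, n ≤ m → f (m + 1) = f m := by
    intro m hm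
    refine le_antisymm (hf m.le_succ) ?_
    intro x hx
    obtain ⟨a, ha, d, hd, hxad⟩ := hrel m x hx
    have hdT : d ∈ T m := by
      have h1 : d ∈ T (m + 1) := by rw [hTsucc]; exact Submodule.mem_sup_left hd
      rw [hn (m + 1) (hm.trans m.le_succ), ← hn m hm] at h1
      exact h1
    have hd0 : d = 0 := by
      have := decomp_unique (hT m) (Submodule.mem_inf.1 hd).2 (T m).zero_mem
        (f m).zero_mem hdT (by rw [add_zero, zero_add])
      exact this.1
    rw [hxad, hd0, add_zero]
    exact ha
  refine ⟨n, fun m hm => ?_⟩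
  induction m, hm using Nat.le_induction with
  | base => rfl
  | succ m hm ih => rw [hstep m hm, ih]

/-- if every subtractive left ideal of `S` is a direct summand of `S`,
then `S` is left `k`-Artinian and left `k`-Noetherian (DCC and ACC on subtractive left
ideals). -/
theorem stmt_16 (S : Type*) [Semiring S]
    (h : ∀ I : Submodule S S, Subtractive I → IsDirectSummand I) :
    (∀ f : ℕ → Submodule S S, (∀ n, Subtractive (f n)) → Antitone f →
      ∃ n, ∀ m, n ≤ m → f m = f n) ∧
    (∀ f : ℕ → Submodule S S, (∀ n, Subtractive (f n)) → Monotone f →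
      ∃ n, ∀ m, n ≤ m → f m = f n) := by
  exact ⟨fun f hs hf => dcc_aux h f hs hf, fun f hs hf => acc_aux h f hs hf⟩
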